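/- With the setup of the projection π_L : X ⇢ P^3 from the line L = F_1 ∩ F_2 on the Segre variety X = s(P^2 × P^1) ⊂ P^5: the image π_L(F_1) is a single point P of P^3, the image π_L(F_2) is a line B ⊂ P^3, and P does not lie on B. -/

import Mathlib

/-!
View `k⁶` as `k³ ⊗ k²` and complete `a` to a basis `a, b` of `k²`, so that
`k⁶ = (k³ ⊗ a) ⊕ (k³ ⊗ b)` and `ker π = l ⊗ a`. Then `π` is injective on `k³ ⊗ b`, and on
`k³ ⊗ a` it has kernel `l` of codimension one, so all of `F₁ \ L` goes to a single point `P`.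
A point `s(x, c a + d b)` of `F₂` with `x ∈ l` goes to `d π(x ⊗ b)`, so `π(F₂ \ L)` is the
projectivization of the 2-dimensional subspace `π(l ⊗ b)`. Finally `π(x₀ ⊗ a) = π(y ⊗ b)`
would put `x₀ ⊗ a - y ⊗ b` into `l ⊗ a`, forcing `x₀ ∈ l`; hence `P ∉ B`.
-/

open Projectivization Set

/-- `ℙ^(n-1)`-style projective space of the vector space `Fin n → k`. -/
abbrev Pk (k : Type*) [Field k] (n : ℕ) := Projectivization k (Fin n → k)

/-- Segre map on vectors. -/
def segV (k : Type*) [Field k] (x : Fin 3 → k) (y : Fin 2 → k) : Fin 6 → k :=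
  fun i => x ⟨i.1 / 2, by have := i.2; omega⟩ * y ⟨i.1 % 2, by omega⟩

theorem segV_ne_zero (k : Type*) [Field k] {x : Fin 3 → k} {y : Fin 2 → k}
    (hx : x ≠ 0) (hy : y ≠ 0) : segV k x y ≠ 0 := by
  obtain ⟨a, ha⟩ := Function.ne_iff.mp hx
  obtain ⟨b, hb⟩ := Function.ne_iff.mp hy
  intro h
  have ha2 := a.2
  have hb2 := b.2
  have h6 : 2 * a.1 + b.1 < 6 := by omega
  have hkey := congrFun h ⟨2 * a.1 + b.1, h6⟩
  simp only [segV, Pi.zero_apply] at hkey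
  have e1 : (⟨(2 * a.1 + b.1) / 2, by omega⟩ : Fin 3) = a := Fin.ext (by simp; omega)
  have e2 : (⟨(2 * a.1 + b.1) % 2, by omega⟩ : Fin 2) = b := Fin.ext (by simp; omega)
  rw [e1, e2] at hkey
  exact (mul_ne_zero ha hb) hkey

/-- The Segre embedding `s : ℙ² × ℙ¹ → ℙ⁵`. -/
noncomputable def segre (k : Type*) [Field k] (p : Pk k 3) (q : Pk k 2) : Pk k 6 :=
  Projectivization.mk k (segV k p.rep q.rep) (segV_ne_zero k p.rep_nonzero q.rep_nonzero)

/-- The Segre threefold `X = s(ℙ² × ℙ¹) ⊆ ℙ⁵`. -/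
def SegreX (k : Type*) [Field k] : Set (Pk k 6) := {z | ∃ p q, z = segre k p q}

/-- The set of points of projective space lying in a linear subspace `W`. -/
def projLin {k : Type*} [Field k] {n : ℕ} (W : Submodule k (Fin n → k)) : Set (Pk k n) :=
  {p | p.rep ∈ W}

/-- The plane `F₁ = s(ℙ² × {a})` of the ruling. -/
def F1set (k : Type*) [Field k] (a : Pk k 2) : Set (Pk k 6) := {z | ∃ p, z = segre k p a}
/-- The quadric surface `F₂ = s(l × ℙ¹)` for a line `l ⊆ ℙ²` (given by a 2-dimensional
vector subspace of `Fin 3 → k`). -/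
def F2set (k : Type*) [Field k] (l : Submodule k (Fin 3 → k)) : Set (Pk k 6) :=
  {z | ∃ p q, p.rep ∈ l ∧ z = segre k p q}

/-- The 2-dimensional vector subspace corresponding to the line `L = F₁ ∩ F₂ ⊆ ℙ⁵`. -/
def WL (k : Type*) [Field k] (l : Submodule k (Fin 3 → k)) (a : Pk k 2) :
    Submodule k (Fin 6 → k) :=
  Submodule.span k {v | ∃ x ∈ l, v = segV k x a.rep}

/-- A subset of projective space is (Zariski-)closed algebraic iff it is the common zero set
of a family of homogeneous polynomials. -/
def AlgSet {k : Type*} [Field k] {n : ℕ} (S : Set (Pk k n)) : Prop :=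
  ∃ T : Set (MvPolynomial (Fin n) k), (∀ f ∈ T, ∃ d, f.IsHomogeneous d) ∧
    S = {p | ∀ f ∈ T, MvPolynomial.eval p.rep f = 0}

/-- The linear projection `ℙ⁵ ⇢ ℙ³` induced by a linear map `π` (defined away from the
projectivization of `ker π`, junk value elsewhere). -/
noncomputable def projFrom (k : Type*) [Field k] (π : (Fin 6 → k) →ₗ[k] (Fin 4 → k))
    (p : Pk k 6) : Pk k 4 :=
  letI := Classical.propDecidable
  if h : π p.rep ≠ 0 then Projectivization.mk k (π p.rep) h
  else Projectivization.mk k (fun _ => 1) (fun h0 => one_ne_zero (congrFun h0 0))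

section Segre

variable {k : Type*} [Field k]

lemma segV_add_left (x x' : Fin 3 → k) (y : Fin 2 → k) :
    segV k (x + x') y = segV k x y + segV k x' y := by
  funext i; simp [segV, add_mul]

lemma segV_smul_left (c : k) (x : Fin 3 → k) (y : Fin 2 → k) :
    segV k (c • x) y = c • segV k x y := by
  funext i; simp [segV, mul_assoc]

lemma segV_add_right (x : Fin 3 → k) (y y' : Fin 2 → k) :
    segV k x (y + y') = segV k x y + segV k x y' := by
  funext i; simp [segV, mul_add]

lemma segV_smul_right (c : k) (x : Fin 3 → k) (y : Fin 2 → k) :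
    segV k x (c • y) = c • segV k x y := by
  funext i; simp only [segV, Pi.smul_apply, smul_eq_mul]; ring

def segL (y : Fin 2 → k) : (Fin 3 → k) →ₗ[k] (Fin 6 → k) where
  toFun x := segV k x y
  map_add' x x' := segV_add_left x x' y
  map_smul' c x := segV_smul_left c x y

@[simp] lemma segL_apply (y : Fin 2 → k) (x : Fin 3 → k) : segL y x = segV k x y := rfl

lemma segV_apply_two_mul_add (x : Fin 3 → k) (y : Fin 2 → k) (i : Fin 3) (j : Fin 2) :
    segV k x y ⟨2 * i.1 + j.1, by omega⟩ = x i * y j := by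
  simp only [segV]
  congr 2 <;> ext <;> simp <;> omega

lemma segL_injective {y : Fin 2 → k} (hy : y ≠ 0) : Function.Injective (segL y) := by
  rw [← LinearMap.ker_eq_bot, LinearMap.ker_eq_bot']
  intro x hx
  obtain ⟨j, hj⟩ := Function.ne_iff.mp hy
  funext i
  have := congrFun hx ⟨2 * i.1 + j.1, by omega⟩
  rw [segL_apply, segV_apply_two_mul_add] at this
  exact (mul_eq_zero.mp this).resolve_right hj

lemma eq_zero_of_segV_add_segV_eq_zero {y z : Fin 2 → k} (h : LinearIndependent k ![y, z])
    {u v : Fin 3 → k} (he : segV k u y + segV k v z = 0) : u = 0 ∧ v = 0 := by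
  have hrow (i : Fin 3) : u i = 0 ∧ v i = 0 := by
    refine LinearIndependent.pair_iff.mp h _ _ (funext fun j => ?_)
    have := congrFun he ⟨2 * i.1 + j.1, by omega⟩
    rw [Pi.add_apply, Pi.zero_apply, segV_apply_two_mul_add, segV_apply_two_mul_add] at this
    simp only [Pi.add_apply, Pi.smul_apply, smul_eq_mul, Pi.zero_apply]
    linear_combination this
  exact ⟨funext fun i => (hrow i).1, funext fun i => (hrow i).2⟩

lemma segre_eq_mk (p : Pk k 3) (q : Pk k 2) :
    segre k p q = mk k (segV k p.rep q.rep) (segV_ne_zero k p.rep_nonzero q.rep_nonzero) := rfl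

lemma segre_mk {x : Fin 3 → k} {y : Fin 2 → k} (hx : x ≠ 0) (hy : y ≠ 0) :
    segre k (mk k x hx) (mk k y hy) = mk k (segV k x y) (segV_ne_zero k hx hy) := by
  obtain ⟨c, hc⟩ := exists_smul_eq_mk_rep k x hx
  obtain ⟨d, hd⟩ := exists_smul_eq_mk_rep k y hy
  rw [segre_eq_mk, mk_eq_mk_iff]
  exact ⟨c * d, by
    simp only [← hc, ← hd, Units.smul_def]
    rw [segV_smul_left, segV_smul_right, Units.val_mul, mul_smul]⟩

lemma WL_eq_map (l : Submodule k (Fin 3 → k)) (a : Pk k 2) :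
    WL k l a = l.map (segL a.rep) := by
  rw [WL, ← Submodule.span_eq (l.map (segL a.rep))]
  congr 1
  ext v
  simp [eq_comm]

lemma segV_add_segV_mem_WL_iff {l : Submodule k (Fin 3 → k)} {a : Pk k 2} {b : Fin 2 → k}
    (hab : LinearIndependent k ![a.rep, b]) (x y : Fin 3 → k) :
    segV k x a.rep + segV k y b ∈ WL k l a ↔ x ∈ l ∧ y = 0 := by
  rw [WL_eq_map, Submodule.mem_map]
  constructor
  · rintro ⟨m, hm, he⟩
    have hsum : segV k (x - m) a.rep + segV k y b = 0 := by
      rw [segL_apply] at he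
      rw [← segL_apply, map_sub, segL_apply, segL_apply, he]
      abel
    obtain ⟨hxm, hy⟩ := eq_zero_of_segV_add_segV_eq_zero hab hsum
    exact ⟨sub_eq_zero.mp hxm ▸ hm, hy⟩
  · rintro ⟨hx, rfl⟩
    exact ⟨x, hx, by simp [← segL_apply]⟩

end Segre

section Projective

variable {k : Type*} [Field k]

lemma mem_projLin_mk {n : ℕ} {W : Submodule k (Fin n → k)} {v : Fin n → k} (hv : v ≠ 0) :
    mk k v hv ∈ projLin W ↔ v ∈ W := by
  obtain ⟨c, hc⟩ := exists_smul_eq_mk_rep k v hv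
  change (mk k v hv).rep ∈ W ↔ v ∈ W
  rw [← hc]
  exact Submodule.smul_mem_iff_of_isUnit W c.isUnit

lemma projFrom_mk (π : (Fin 6 → k) →ₗ[k] (Fin 4 → k)) {v : Fin 6 → k} (hv : v ≠ 0)
    (h : π v ≠ 0) : projFrom k π (mk k v hv) = mk k (π v) h := by
  obtain ⟨c, hc⟩ := exists_smul_eq_mk_rep k v hv
  have hrep : π (mk k v hv).rep = c • π v := by
    rw [← hc, Units.smul_def, map_smul, Units.smul_def]
  rw [projFrom, dif_pos (by rw [hrep]; exact smul_ne_zero c.ne_zero h), mk_eq_mk_iff]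
  exact ⟨c, hrep.symm⟩

lemma mk_eq_mk_of_finrank_range_eq_one {V W : Type*} [AddCommGroup V] [Module k V]
    [AddCommGroup W] [Module k W] (f : V →ₗ[k] W)
    (hf : Module.finrank k (LinearMap.range f) = 1)
    {x y : V} (hx : f x ≠ 0) (hy : f y ≠ 0) : mk k (f x) hx = mk k (f y) hy := by
  have hx' : (⟨f x, LinearMap.mem_range_self f x⟩ : LinearMap.range f) ≠ 0 :=
    fun h => hx (congrArg Subtype.val h)
  obtain ⟨c, hc⟩ :=
    (finrank_eq_one_iff_of_nonzero' _ hx').mp hf ⟨f y, LinearMap.mem_range_self f y⟩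
  have hc' : c • f x = f y := congrArg Subtype.val hc
  have hc0 : c ≠ 0 := by rintro rfl; exact hy (by rw [← hc', zero_smul])
  exact (mk_eq_mk_iff' k _ _ hx hy).mpr
    ⟨c⁻¹, by rw [← hc', smul_smul, inv_mul_cancel₀ hc0, one_smul]⟩

end Projective

section ProjectionFromL

variable {k : Type*} [Field k] {a : Pk k 2} {l : Submodule k (Fin 3 → k)}
  {π : (Fin 6 → k) →ₗ[k] (Fin 4 → k)}

lemma map_segV_rep_eq_zero_iff (hker : LinearMap.ker π = WL k l a) (x : Fin 3 → k) :
    π (segV k x a.rep) = 0 ↔ x ∈ l := by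
  rw [← LinearMap.mem_ker, hker, WL_eq_map, ← segL_apply]
  exact (segL_injective a.rep_nonzero).mem_set_image

lemma injective_comp_segL (hker : LinearMap.ker π = WL k l a) {b : Fin 2 → k}
    (hab : LinearIndependent k ![a.rep, b]) : Function.Injective (π ∘ₗ segL b) := by
  rw [← LinearMap.ker_eq_bot, LinearMap.ker_eq_bot']
  intro y hy
  have hmem := (segV_add_segV_mem_WL_iff (l := l) hab 0 y).mp
  rw [← hker, LinearMap.mem_ker, map_add, ← segL_apply a.rep, map_zero, map_zero,
    zero_add] at hmem
  exact (hmem hy).2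

lemma image_projFrom_F1set (hker : LinearMap.ker π = WL k l a) (hl : Module.finrank k l = 2)
    {x₀ : Fin 3 → k} (hx₀ : π (segV k x₀ a.rep) ≠ 0) :
    projFrom k π '' (F1set k a \ projLin (WL k l a)) = {mk k _ hx₀} := by
  have hrange : Module.finrank k (LinearMap.range (π ∘ₗ segL a.rep)) = 1 := by
    have hrn := LinearMap.finrank_range_add_finrank_ker (π ∘ₗ segL a.rep)
    have hkerl : LinearMap.ker (π ∘ₗ segL a.rep) = l := by
      ext x; exact map_segV_rep_eq_zero_iff hker x
    rw [hkerl, hl, Module.finrank_fin_fun] at hrn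
    omega
  have hx₀ne : x₀ ≠ 0 := by rintro rfl; simp [← segL_apply] at hx₀
  ext z
  simp only [mem_image, mem_singleton_iff, mem_sdiff, F1set, mem_ofPred_eq]
  constructor
  · rintro ⟨_, ⟨⟨p, rfl⟩, hp⟩, rfl⟩
    have hπp : π (segV k p.rep a.rep) ≠ 0 := fun h =>
      hp (by rw [segre_eq_mk, mem_projLin_mk, ← hker]; exact h)
    rw [segre_eq_mk, projFrom_mk π _ hπp]
    exact mk_eq_mk_of_finrank_range_eq_one (π ∘ₗ segL a.rep) hrange (x := p.rep) hπp hx₀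
  · rintro rfl
    have hs : segre k (mk k x₀ hx₀ne) a =
        mk k (segV k x₀ a.rep) (segV_ne_zero k hx₀ne a.rep_nonzero) := by
      conv_lhs => rw [← mk_rep a]
      exact segre_mk hx₀ne a.rep_nonzero
    refine ⟨_, ⟨⟨mk k x₀ hx₀ne, rfl⟩, ?_⟩, ?_⟩
    · rw [hs, mem_projLin_mk, ← hker]; exact hx₀
    · rw [hs, projFrom_mk π _ hx₀]

lemma image_projFrom_F2set (hker : LinearMap.ker π = WL k l a) {b : Fin 2 → k}
    (hab : LinearIndependent k ![a.rep, b]) :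
    projFrom k π '' (F2set k l \ projLin (WL k l a)) = projLin (l.map (π ∘ₗ segL b)) := by
  ext z
  simp only [mem_image, mem_sdiff, F2set, mem_ofPred_eq]
  constructor
  · rintro ⟨_, ⟨⟨p, q, hp, rfl⟩, hpq⟩, rfl⟩
    have hπ : π (segV k p.rep q.rep) ≠ 0 := fun h =>
      hpq (by rw [segre_eq_mk, mem_projLin_mk, ← hker]; exact h)
    rw [segre_eq_mk, projFrom_mk π _ hπ, mem_projLin_mk]
    have hspan := hab.span_eq_top_of_card_eq_finrank (by simp)
    rw [Matrix.range_cons_cons_empty] at hspan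
    obtain ⟨c, d, hq⟩ := Submodule.mem_span_pair.mp (hspan ▸ Submodule.mem_top (x := q.rep))
    rw [← hq, segV_add_right, segV_smul_right, segV_smul_right, map_add, map_smul, map_smul,
      (map_segV_rep_eq_zero_iff hker _).mpr hp, smul_zero, zero_add]
    exact Submodule.smul_mem _ _ (Submodule.mem_map_of_mem hp)
  · intro hz
    obtain ⟨x, hx, hxz⟩ := Submodule.mem_map.mp hz
    have hxz' : π (segV k x b) = z.rep := hxz
    have hπ : π (segV k x b) ≠ 0 := hxz' ▸ z.rep_nonzero
    have hxne : x ≠ 0 := by rintro rfl; simp [← segL_apply] at hπ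
    have hbne : b ≠ 0 := hab.ne_zero 1
    refine ⟨_, ⟨⟨mk k x hxne, mk k b hbne, (mem_projLin_mk hxne).mpr hx, rfl⟩, ?_⟩, ?_⟩
    · rw [segre_mk, mem_projLin_mk, ← hker]; exact hπ
    · rw [segre_mk, projFrom_mk π _ hπ]
      conv_rhs => rw [← mk_rep z]
      exact (mk_eq_mk_iff' k _ _ hπ z.rep_nonzero).mpr ⟨1, by rw [one_smul, hxz']⟩

lemma mk_map_segV_rep_notMem (hker : LinearMap.ker π = WL k l a) {b : Fin 2 → k}
    (hab : LinearIndependent k ![a.rep, b]) {x₀ : Fin 3 → k} (hx₀ : π (segV k x₀ a.rep) ≠ 0) :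
    mk k _ hx₀ ∉ projLin (l.map (π ∘ₗ segL b)) := by
  rw [mem_projLin_mk]
  rintro ⟨y, -, hy⟩
  have hmem : segV k x₀ a.rep + segV k (-y) b ∈ WL k l a := by
    rw [← hker, LinearMap.mem_ker, ← segL_apply b, map_neg, segL_apply, map_add, map_neg,
      ← hy]
    simp
  exact hx₀ <|
    (map_segV_rep_eq_zero_iff hker x₀).mpr ((segV_add_segV_mem_WL_iff hab _ _).mp hmem).1

end ProjectionFromL

theorem statement3_general (k : Type*) [Field k]
    (a : Pk k 2) (l : Submodule k (Fin 3 → k)) (hl : Module.finrank k l = 2)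
    (π : (Fin 6 → k) →ₗ[k] (Fin 4 → k))
    (hker : LinearMap.ker π = WL k l a) :
    ∃ (P0 : Pk k 4) (WB : Submodule k (Fin 4 → k)), Module.finrank k WB = 2 ∧
      projFrom k π '' (F1set k a \ projLin (WL k l a)) = {P0} ∧
      projFrom k π '' (F2set k l \ projLin (WL k l a)) = projLin WB ∧
      P0 ∉ projLin WB := by
  obtain ⟨b, hab⟩ := exists_linearIndependent_pair_of_one_lt_finrank
    (by rw [Module.finrank_fin_fun]; norm_num) a.rep_nonzero
  obtain ⟨x₀, -, hx₀⟩ := SetLike.exists_of_lt (lt_top_iff_ne_top.mpr fun h : l = ⊤ => by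
    rw [h, finrank_top, Module.finrank_fin_fun] at hl; omega)
  have hx₀π : π (segV k x₀ a.rep) ≠ 0 := (map_segV_rep_eq_zero_iff hker x₀).not.mpr hx₀
  refine ⟨mk k _ hx₀π, l.map (π ∘ₗ segL b), ?_, image_projFrom_F1set hker hl hx₀π,
    image_projFrom_F2set hker hab, mk_map_segV_rep_notMem hker hab hx₀π⟩
  rw [← (Submodule.equivMapOfInjective _ (injective_comp_segL hker hab) l).finrank_eq, hl]

/-- for the projection π_L : X ⇢ ℙ³ from the line L = F₁ ∩ F₂ of the Segre
threefold, the image of F₁ (away from L) is a single point P of ℙ³, the image of F₂ (away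
from L) is a line B of ℙ³, and P does not lie on B. -/
theorem statement3 (k : Type*) [Field k] [IsAlgClosed k]
    (a : Pk k 2) (l : Submodule k (Fin 3 → k)) (hl : Module.finrank k l = 2)
    (π : (Fin 6 → k) →ₗ[k] (Fin 4 → k)) (hπ : Function.Surjective π)
    (hker : LinearMap.ker π = WL k l a) :
    ∃ (P0 : Pk k 4) (WB : Submodule k (Fin 4 → k)), Module.finrank k WB = 2 ∧
      projFrom k π '' (F1set k a \ projLin (WL k l a)) = {P0} ∧
      projFrom k π '' (F2set k l \ projLin (WL k l a)) = projLin WB ∧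
      P0 ∉ projLin WB :=
  statement3_general k a l hl π hker
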